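/- arXiv:1708.05487 — 4 statements merged into one kernel-verified Lean document; each statement's English description precedes it below -/
import Mathlib

section
/- Let A be a real n×d matrix, y ∈ ℝⁿ, and λ > 0. If θ̂ ∈ ℝᵈ is a global minimizer over ℝᵈ of the function F(θ) = (1/(2n))‖y − Aθ‖₂² + λ‖θ‖₁, then (1/n)·⟨Aθ̂, y − Aθ̂⟩ = λ‖θ̂‖₁, where ⟨·,·⟩ is the Euclidean inner product on ℝⁿ. -/
/-!
Scaling the minimizer along its own ray, `s ↦ F (s • θ̂)` agrees for `s > 0` with the
quadratic `q s = (1/(2n)) ∑ᵢ (yᵢ - s (Aθ̂)ᵢ)² + λ s ‖θ̂‖₁`, since the `ℓ¹` norm is positively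
homogeneous. So `q` has a local minimum at `s = 1`, and `q' 1 = -(1/n) ⟨Aθ̂, y - Aθ̂⟩ + λ ‖θ̂‖₁`
vanishes.
-/

open Finset

lemma sum_abs_smul_of_nonneg {ι : Type*} [Fintype ι] {s : ℝ} (hs : 0 ≤ s) (x : ι → ℝ) :
    ∑ j, |(s • x) j| = s * ∑ j, |x j| := by
  simp only [Pi.smul_apply, smul_eq_mul, abs_mul, abs_of_nonneg hs, mul_sum]

lemma isLocalMin_one_of_forall_le_of_smul_eq {E : Type*} [AddCommGroup E] [Module ℝ E]
    {F : E → ℝ} {x : E} (hmin : ∀ z, F x ≤ F z) {q : ℝ → ℝ}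
    (hq : ∀ s, 0 < s → F (s • x) = q s) : IsLocalMin q 1 := by
  filter_upwards [lt_mem_nhds one_pos] with s hs
  rw [← hq s hs, ← hq 1 one_pos, one_smul]
  exact hmin _

lemma hasDerivAt_sum_sq_sub_mul {ι : Type*} [Fintype ι] (y v : ι → ℝ) (s : ℝ) :
    HasDerivAt (fun s => ∑ i, (y i - s * v i) ^ 2) (-2 * ∑ i, v i * (y i - s * v i)) s := by
  rw [mul_sum]
  refine HasDerivAt.fun_sum fun i _ => ?_
  exact (((hasDerivAt_id' s).mul_const (v i)).const_sub (y i)).fun_pow 2 |>.congr_deriv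
    (by push_cast; ring)

theorem stmt_1_general (n d : ℕ)
    (A : Matrix (Fin n) (Fin d) ℝ) (y : Fin n → ℝ) (lam : ℝ)
    (θhat : Fin d → ℝ)
    (hmin : ∀ θ : Fin d → ℝ,
      (1 / (2 * (n : ℝ))) * ∑ i, (y i - A.mulVec θhat i) ^ 2 + lam * ∑ j, |θhat j| ≤
      (1 / (2 * (n : ℝ))) * ∑ i, (y i - A.mulVec θ i) ^ 2 + lam * ∑ j, |θ j|) :
    (1 / (n : ℝ)) * ∑ i, A.mulVec θhat i * (y i - A.mulVec θhat i) = lam * ∑ j, |θhat j| := by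
  set v := A.mulVec θhat
  set F : (Fin d → ℝ) → ℝ := fun θ =>
    (1 / (2 * (n : ℝ))) * ∑ i, (y i - A.mulVec θ i) ^ 2 + lam * ∑ j, |θ j|
  set q : ℝ → ℝ := fun s =>
    (1 / (2 * (n : ℝ))) * ∑ i, (y i - s * v i) ^ 2 + lam * (s * ∑ j, |θhat j|)
  have hray : ∀ s, 0 < s → F (s • θhat) = q s := by
    intro s hs
    simp only [F, q, Matrix.mulVec_smul, sum_abs_smul_of_nonneg hs.le]
    rfl
  have hloc : IsLocalMin q 1 := isLocalMin_one_of_forall_le_of_smul_eq (F := F) hmin hray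
  have hderiv : HasDerivAt q ((1 / (2 * (n : ℝ))) * (-2 * ∑ i, v i * (y i - 1 * v i))
      + lam * ∑ j, |θhat j|) 1 :=
    ((hasDerivAt_sum_sq_sub_mul y v 1).const_mul _).add
      ((hasDerivAt_mul_const _).const_mul lam)
  have hcrit := hloc.hasDerivAt_eq_zero hderiv
  simp only [one_mul] at hcrit
  linear_combination (-1 : ℝ) * hcrit

theorem stmt_1 (n d : ℕ) (hn : 0 < n) (hd : 0 < d)
    (A : Matrix (Fin n) (Fin d) ℝ) (y : Fin n → ℝ) (lam : ℝ) (hlam : 0 < lam)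
    (θhat : Fin d → ℝ)
    (hmin : ∀ θ : Fin d → ℝ,
      (1 / (2 * (n : ℝ))) * ∑ i, (y i - A.mulVec θhat i) ^ 2 + lam * ∑ j, |θhat j| ≤
      (1 / (2 * (n : ℝ))) * ∑ i, (y i - A.mulVec θ i) ^ 2 + lam * ∑ j, |θ j|) :
    (1 / (n : ℝ)) * ∑ i, A.mulVec θhat i * (y i - A.mulVec θhat i) = lam * ∑ j, |θhat j| :=
  stmt_1_general n d A y lam θhat hmin
end

section
/- In the nodewise regression setup with all τ̂_j² > 0, for every j ∈ {1,…,p} the j-th entry of the row vector Θ̂_{j·}Σ̃ equals 1; equivalently, (1/n)·Θ̂_{j·}X̃ᵀX̃_j = 1, where Θ̂_{j·} denotes the j-th row of Θ̂ and X̃_j the j-th column of X̃. -/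
open Finset

/-!
Scaling the Lasso minimizer `θ̂_j` by `t ≥ 0` gives a quadratic in `t` minimized at `t = 1`; its
vanishing derivative there says `(1/n)⟨r, X̃_{-j}θ̂_j⟩ = λ⁽ʲ⁾‖θ̂_j‖₁` for the residual
`r = X̃_j - X̃_{-j}θ̂_j`. Hence `τ̂_j² = (1/n)⟨r, r + X̃_{-j}θ̂_j⟩ = (1/n)⟨r, X̃_j⟩`, and the latter is
`τ̂_j² (Θ̂Σ̃)_{jj}`.
-/

lemma two_mul_add_eq_zero_of_isMinOn_quadratic {a b : ℝ}
    (h : IsMinOn (fun t : ℝ => a * t ^ 2 + b * t) (Set.Ici 0) 1) : 2 * a + b = 0 := by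
  have hderiv : HasDerivAt (fun t : ℝ => a * t ^ 2 + b * t) (2 * a + b) 1 := by
    exact (((hasDerivAt_pow 2 (1 : ℝ)).const_mul a).add
      ((hasDerivAt_id' (1 : ℝ)).const_mul b)).congr_deriv (by ring)
  exact (h.isLocalMin (Ici_mem_nhds zero_lt_one)).hasDerivAt_eq_zero hderiv

lemma sum_sub_mul_sq {ι : Type*} [Fintype ι] (y v : ι → ℝ) (t : ℝ) :
    ∑ i, (y i - t * v i) ^ 2 = ∑ i, y i ^ 2 - 2 * t * ∑ i, y i * v i + t ^ 2 * ∑ i, v i ^ 2 := by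
  simp only [mul_sum, ← sum_sub_distrib, ← sum_add_distrib]
  exact sum_congr rfl fun i _ => by ring

lemma two_mul_sum_sub_mul_eq_of_isMinOn_ray {ι : Type*} [Fintype ι] {y v : ι → ℝ} {c μ : ℝ}
    (h : IsMinOn (fun t : ℝ => c * ∑ i, (y i - t * v i) ^ 2 + t * μ) (Set.Ici 0) 1) :
    2 * c * ∑ i, (y i - v i) * v i = μ := by
  have hquad := two_mul_add_eq_zero_of_isMinOn_quadratic (a := c * ∑ i, v i ^ 2)
    (b := μ - 2 * c * ∑ i, y i * v i) fun t ht => by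
      have := h ht
      simp only [Set.mem_ofPred_eq, sum_sub_mul_sq] at this ⊢
      linarith
  simp only [sub_mul, sum_sub_distrib, ← sq]
  linarith

noncomputable def lassoObjective {ι κ : Type*} [Fintype ι] [Fintype κ] (A : Matrix ι κ ℝ)
    (y : ι → ℝ) (c lam : ℝ) (θ : κ → ℝ) : ℝ :=
  c * ∑ i, (y i - ∑ k, A i k * θ k) ^ 2 + lam * ∑ k, |θ k|

section Lasso

variable {ι κ : Type*} [Fintype ι] [Fintype κ] (A : Matrix ι κ ℝ) (y : ι → ℝ) (c lam : ℝ)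

lemma lassoObjective_smul (θ : κ → ℝ) {t : ℝ} (ht : 0 ≤ t) :
    lassoObjective A y c lam (t • θ) =
      c * ∑ i, (y i - t * ∑ k, A i k * θ k) ^ 2 + t * (lam * ∑ k, |θ k|) := by
  have hfit : ∀ i, ∑ k, A i k * (t * θ k) = t * ∑ k, A i k * θ k := fun i => by
    rw [mul_sum]
    exact sum_congr rfl fun k _ => by ring
  simp only [lassoObjective, Pi.smul_apply, smul_eq_mul, hfit, abs_mul, abs_of_nonneg ht, ← mul_sum]
  ring

lemma two_mul_sum_residual_mul_fit_eq_of_forall_le {θ₀ : κ → ℝ}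
    (hθ₀ : ∀ θ, lassoObjective A y c lam θ₀ ≤ lassoObjective A y c lam θ) :
    2 * c * ∑ i, (y i - ∑ k, A i k * θ₀ k) * ∑ k, A i k * θ₀ k = lam * ∑ k, |θ₀ k| := by
  refine two_mul_sum_sub_mul_eq_of_isMinOn_ray fun t (ht : 0 ≤ t) => ?_
  have := hθ₀ (t • θ₀)
  rwa [lassoObjective_smul A y c lam θ₀ ht, ← one_smul ℝ θ₀,
    lassoObjective_smul A y c lam θ₀ zero_le_one, one_smul] at this

end Lasso

/-- The `j`-th row of `Ĉ`. -/
def nodewiseRow {κ : Type*} [DecidableEq κ] (j : κ) (w : {k // k ≠ j} → ℝ) (k : κ) : ℝ :=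
  if h : k = j then 1 else -w ⟨k, h⟩

lemma sum_nodewiseRow_mul_gram {ι κ : Type*} [Fintype ι] [Fintype κ] [DecidableEq κ]
    (X : Matrix ι κ ℝ) (j : κ) (w : {k // k ≠ j} → ℝ) :
    ∑ k, nodewiseRow j w k * ∑ i, X i k * X i j =
      ∑ i, (X i j - ∑ k, X i k.1 * w k) * X i j := by
  have hoff : ∀ k : {k // k ≠ j}, nodewiseRow j w k = -w k := fun k => dif_neg k.2
  rw [Fintype.sum_eq_add_sum_subtype_ne _ j, nodewiseRow, dif_pos rfl]
  simp only [hoff, one_mul, neg_mul, sum_neg_distrib, sub_mul, sum_sub_distrib, sum_mul, mul_sum]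
  rw [sum_comm, ← sub_eq_add_neg]
  simp only [mul_assoc, mul_left_comm]

theorem stmt_3_general (n p : ℕ)
    (X : Matrix (Fin n) (Fin p) ℝ) (lam : Fin p → ℝ)
    (θhat : ∀ j : Fin p, {k : Fin p // k ≠ j} → ℝ)
    (hmin : ∀ j : Fin p, ∀ θ : {k : Fin p // k ≠ j} → ℝ,
      (1 / (2 * (n : ℝ))) * ∑ i, (X i j - ∑ k, X i k.1 * θhat j k) ^ 2
          + lam j * ∑ k, |θhat j k| ≤
      (1 / (2 * (n : ℝ))) * ∑ i, (X i j - ∑ k, X i k.1 * θ k) ^ 2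
          + lam j * ∑ k, |θ k|)
    (tau2 : Fin p → ℝ)
    (htau : ∀ j, tau2 j =
      (1 / (n : ℝ)) * ∑ i, (X i j - ∑ k, X i k.1 * θhat j k) ^ 2
          + lam j * ∑ k, |θhat j k|)
    (htaupos : ∀ j, 0 < tau2 j)
    (Theta : Matrix (Fin p) (Fin p) ℝ)
    (hTheta : ∀ j k, Theta j k =
      (if h : k = j then (1 : ℝ) else -(θhat j ⟨k, h⟩)) / tau2 j)
    (Sigma : Matrix (Fin p) (Fin p) ℝ)
    (hSigma : ∀ k l, Sigma k l = (1 / (n : ℝ)) * ∑ i, X i k * X i l) :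
    ∀ j : Fin p, ∑ k, Theta j k * Sigma k j = 1 := by
  intro j
  have hfoc := two_mul_sum_residual_mul_fit_eq_of_forall_le (fun i (k : {k // k ≠ j}) => X i k)
    (fun i => X i j) (1 / (2 * (n : ℝ))) (lam j) (hmin j)
  have htau_eq : tau2 j = 1 / n * ∑ i, (X i j - ∑ k, X i k.1 * θhat j k) * X i j := by
    rw [htau j, ← hfoc, mul_sum, mul_sum, mul_sum, ← sum_add_distrib]
    exact sum_congr rfl fun i _ => by ring
  have hrow : ∀ k, Theta j k = nodewiseRow j (θhat j) k / tau2 j := hTheta j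
  calc ∑ k, Theta j k * Sigma k j
      = (1 / n * ∑ k, nodewiseRow j (θhat j) k * ∑ i, X i k * X i j) / tau2 j := by
        rw [mul_sum, sum_div]
        exact sum_congr rfl fun k _ => by rw [hrow, hSigma]; ring
    _ = tau2 j / tau2 j := by rw [sum_nodewiseRow_mul_gram, htau_eq]
    _ = 1 := div_self (htaupos j).ne'

theorem stmt_3 (n p : ℕ) (hn : 0 < n) (hp : 2 ≤ p)
    (X : Matrix (Fin n) (Fin p) ℝ) (lam : Fin p → ℝ) (hlam : ∀ j, 0 < lam j)
    (θhat : ∀ j : Fin p, {k : Fin p // k ≠ j} → ℝ)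
    (hmin : ∀ j : Fin p, ∀ θ : {k : Fin p // k ≠ j} → ℝ,
      (1 / (2 * (n : ℝ))) * ∑ i, (X i j - ∑ k, X i k.1 * θhat j k) ^ 2
          + lam j * ∑ k, |θhat j k| ≤
      (1 / (2 * (n : ℝ))) * ∑ i, (X i j - ∑ k, X i k.1 * θ k) ^ 2
          + lam j * ∑ k, |θ k|)
    (tau2 : Fin p → ℝ)
    (htau : ∀ j, tau2 j =
      (1 / (n : ℝ)) * ∑ i, (X i j - ∑ k, X i k.1 * θhat j k) ^ 2
          + lam j * ∑ k, |θhat j k|)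
    (htaupos : ∀ j, 0 < tau2 j)
    (Theta : Matrix (Fin p) (Fin p) ℝ)
    (hTheta : ∀ j k, Theta j k =
      (if h : k = j then (1 : ℝ) else -(θhat j ⟨k, h⟩)) / tau2 j)
    (Sigma : Matrix (Fin p) (Fin p) ℝ)
    (hSigma : ∀ k l, Sigma k l = (1 / (n : ℝ)) * ∑ i, X i k * X i l) :
    ∀ j : Fin p, ∑ k, Theta j k * Sigma k j = 1 :=
  stmt_3_general n p X lam θhat hmin tau2 htau htaupos Theta hTheta Sigma hSigma
end

section
/- Let K be an n×n real symmetric positive semidefinite matrix, λ₂ > 0, and A = K(nλ₂ I + K)⁻¹. Let (I − A)^{1/2} denote the positive semidefinite square root of the positive semidefinite matrix I − A. Then the spectral norm of (I − A)^{1/2} K (I − A)^{1/2} is at most nλ₂; equivalently, for every v ∈ ℝⁿ, vᵀ(I − A)^{1/2} K (I − A)^{1/2} v ≤ nλ₂‖v‖₂². -/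
/-!
Put `c = nλ₂` and `M = c • 1 + K`, which is positive definite. Then `1 - A = c • M⁻¹`, so the
square root `S` of `1 - A` satisfies `S * S * M = c • 1`, hence `S * M * S = c • 1`, and
`S * K * S = S * M * S - c • (S * S) = c • A`. Finally `vᵀ A v ≤ vᵀ v` because `1 - A` is
positive semidefinite.
-/

open Finset Matrix

open scoped ComplexOrder in
noncomputable def Matrix.PosSemidef.sqrt {n 𝕜 : Type*} [Fintype n] [DecidableEq n] [RCLike 𝕜]
    {A : Matrix n n 𝕜} (hA : A.PosSemidef) : Matrix n n 𝕜 :=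
  hA.1.eigenvectorUnitary.1 * diagonal ((↑) ∘ (Real.sqrt ·) ∘ hA.1.eigenvalues) *
    (star hA.1.eigenvectorUnitary : Matrix n n 𝕜)

open scoped ComplexOrder in
theorem Matrix.PosSemidef.sqrt_mul_self {n 𝕜 : Type*} [Fintype n] [DecidableEq n] [RCLike 𝕜]
    {A : Matrix n n 𝕜} (hA : A.PosSemidef) : hA.sqrt * hA.sqrt = A := by
  conv_rhs => rw [hA.1.spectral_theorem]
  rw [Unitary.conjStarAlgAut_apply, Matrix.PosSemidef.sqrt]
  have hU := Unitary.coe_star_mul_self hA.1.eigenvectorUnitary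
  simp only [Matrix.mul_assoc]
  rw [← Matrix.mul_assoc (star _ : Matrix n n 𝕜) _ _, hU, Matrix.one_mul,
    ← Matrix.mul_assoc (diagonal _), diagonal_mul_diagonal]
  congr 3
  funext i
  simp only [Function.comp_apply]
  rw [← RCLike.ofReal_mul, Real.mul_self_sqrt (hA.eigenvalues_nonneg i)]

namespace Matrix

variable {ι 𝕜 : Type*} [Fintype ι] [DecidableEq ι] [Field 𝕜]

theorem one_sub_mul_inv_smul_one_add {c : 𝕜} {K : Matrix ι ι 𝕜} (h : IsUnit (c • 1 + K).det) :
    1 - K * (c • 1 + K)⁻¹ = c • (c • 1 + K)⁻¹ := by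
  nth_rw 1 [← mul_nonsing_inv _ h]
  rw [← Matrix.sub_mul, add_sub_cancel_right, Matrix.smul_mul, Matrix.one_mul]

theorem mul_mul_eq_smul_one_of_mul_self_eq_smul_inv {c : 𝕜} {S M : Matrix ι ι 𝕜} (hc : c ≠ 0)
    (hM : IsUnit M.det) (hS : S * S = c • M⁻¹) : S * M * S = c • 1 := by
  have hSM : S * (c⁻¹ • (S * M)) = 1 := by
    rw [Matrix.mul_smul, ← Matrix.mul_assoc, hS, Matrix.smul_mul, nonsing_inv_mul _ hM,
      smul_smul, inv_mul_cancel₀ hc, one_smul]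
  calc S * M * S = c • (c⁻¹ • (S * M) * S) := by
        rw [Matrix.smul_mul, smul_smul, mul_inv_cancel₀ hc, one_smul]
    _ = c • 1 := by rw [mul_eq_one_comm.mp hSM]

theorem mul_mul_eq_smul_of_mul_self_eq_one_sub {c : 𝕜} {K S : Matrix ι ι 𝕜} (hc : c ≠ 0)
    (hM : IsUnit (c • 1 + K).det) (hS : S * S = 1 - K * (c • 1 + K)⁻¹) :
    S * K * S = c • (K * (c • 1 + K)⁻¹) := by
  have hSMS := mul_mul_eq_smul_one_of_mul_self_eq_smul_inv hc hM
    (hS.trans (one_sub_mul_inv_smul_one_add hM))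
  calc S * K * S = S * (c • 1 + K) * S - c • (S * S) := by
        rw [Matrix.mul_add, Matrix.add_mul, Matrix.mul_smul, Matrix.mul_one, Matrix.smul_mul]
        abel
    _ = c • (K * (c • 1 + K)⁻¹) := by rw [hSMS, hS, ← smul_sub, sub_sub_cancel]

theorem dotProduct_mulVec_le_of_posSemidef_one_sub {R : Type*} [CommRing R] [PartialOrder R]
    [StarRing R] [TrivialStar R] [IsOrderedAddMonoid R] {A : Matrix ι ι R}
    (h : (1 - A).PosSemidef) (v : ι → R) : v ⬝ᵥ A *ᵥ v ≤ v ⬝ᵥ v := by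
  have := h.dotProduct_mulVec_nonneg v
  rwa [star_trivial, sub_mulVec, one_mulVec, dotProduct_sub, sub_nonneg] at this

end Matrix

theorem stmt_9 (n : ℕ) (hn : 0 < n) (K : Matrix (Fin n) (Fin n) ℝ)
    (hK : K.PosSemidef) (lam2 : ℝ) (hlam2 : 0 < lam2)
    (A : Matrix (Fin n) (Fin n) ℝ)
    (hA : A = K * (((n : ℝ) * lam2) • (1 : Matrix (Fin n) (Fin n) ℝ) + K)⁻¹)
    (h1A : ((1 : Matrix (Fin n) (Fin n) ℝ) - A).PosSemidef) :
    ∀ v : Fin n → ℝ,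
      v ⬝ᵥ (h1A.sqrt * K * h1A.sqrt).mulVec v ≤ (n : ℝ) * lam2 * ∑ i, v i ^ 2 := by
  intro v
  have hc : 0 < (n : ℝ) * lam2 := mul_pos (Nat.cast_pos.mpr hn) hlam2
  have hM : IsUnit (((n : ℝ) * lam2) • 1 + K).det :=
    ((PosDef.one.smul hc).add_posSemidef hK).det_pos.ne'.isUnit
  have hS := h1A.sqrt_mul_self
  subst hA
  rw [mul_mul_eq_smul_of_mul_self_eq_one_sub hc.ne' hM hS, smul_mulVec, dotProduct_smul,
    smul_eq_mul]
  have hvv : v ⬝ᵥ v = ∑ i, v i ^ 2 := by simp only [dotProduct, sq]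
  exact mul_le_mul_of_nonneg_left (hvv ▸ dotProduct_mulVec_le_of_posSemidef_one_sub h1A v) hc.le
end

section
/- Let α > 1/2 be a real number satisfying 2 + 1/(2α−1) ≤ 1600. Then for every positive integer n, the value r = n^{−α/(2α+1)} lies in (0,1] and satisfies the critical-radius inequality 40 r² ≥ (1/√n)·(Σ_{ℓ=1}^∞ min(r², ℓ^{−2α}))^{1/2}. -/
/-! With `x = r ^ (-1 / α)`, the point where `r ^ 2 = x ^ (-2 α)`, bound the first `⌈x⌉` terms of
the sum by `r ^ 2` each and the remaining ones by `∫ t in Ioi x, t ^ (-2 α) = x ^ (1 - 2 α) / (2 α - 1)`;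
both pieces are multiples of `r ^ (2 - 1 / α)`. For `r = n ^ (-α / (2 α + 1))` one has
`r ^ (2 - 1 / α) = n * r ^ 4`, which is the critical-radius inequality after squaring. -/

open Real Finset

theorem tsum_add_nat_add_one_rpow_neg_le {p x : ℝ} (hp : 1 < p) (hx : 0 < x) :
    ∑' m : ℕ, (x + m + 1) ^ (-p) ≤ x ^ (1 - p) / (p - 1) := by
  refine Real.tsum_le_of_sum_range_le (fun m => by positivity) fun N => ?_
  have hanti : AntitoneOn (fun t : ℝ => t ^ (-p)) (Set.Icc x (x + N)) :=
    fun s hs t _ hst => rpow_le_rpow_of_nonpos (hx.trans_le hs.1) hst (by linarith)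
  have hzero : (0 : ℝ) ∉ Set.uIcc x (x + N) := by
    rw [Set.uIcc_of_le (le_add_of_nonneg_right N.cast_nonneg)]
    exact fun h => hx.not_ge h.1
  have hint : ∫ t in x..x + N, t ^ (-p) = (x ^ (1 - p) - (x + N) ^ (1 - p)) / (p - 1) := by
    rw [integral_rpow (Or.inr ⟨by linarith, hzero⟩), neg_add_eq_sub, ← neg_sub p 1, div_neg,
      ← neg_div, neg_sub]
  calc ∑ m ∈ range N, (x + m + 1) ^ (-p)
      = ∑ m ∈ range N, (x + ((m + 1 : ℕ) : ℝ)) ^ (-p) := by push_cast; simp only [add_assoc]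
    _ ≤ ∫ t in x..x + N, t ^ (-p) := hanti.sum_le_integral
    _ ≤ x ^ (1 - p) / (p - 1) := by
      rw [hint]
      gcongr
      exact sub_le_self _ (by positivity)

theorem summable_nat_add_one_rpow_neg {p : ℝ} (hp : 1 < p) :
    Summable fun ℓ : ℕ => ((ℓ : ℝ) + 1) ^ (-p) := by
  have := (summable_nat_add_iff 1).mpr (Real.summable_nat_rpow.mpr (neg_lt_neg hp))
  simpa only [Nat.cast_add, Nat.cast_one] using this

theorem tsum_min_le_mul_add_tsum_nat_add {f : ℕ → ℝ} (hf : Summable f) (hf0 : ∀ ℓ, 0 ≤ f ℓ)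
    {c : ℝ} (hc : 0 ≤ c) (K : ℕ) :
    ∑' ℓ, min c (f ℓ) ≤ K * c + ∑' ℓ, f (ℓ + K) := by
  have hmin : Summable fun ℓ => min c (f ℓ) :=
    hf.of_nonneg_of_le (fun ℓ => le_min hc (hf0 ℓ)) fun ℓ => min_le_right _ _
  rw [← hmin.sum_add_tsum_nat_add K]
  refine add_le_add ?_ ?_
  · simpa using sum_le_card_nsmul (range K) _ c fun ℓ _ => min_le_left c (f ℓ)
  · exact ((summable_nat_add_iff K).mpr hmin).tsum_le_tsum (fun ℓ => min_le_right _ _)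
      ((summable_nat_add_iff K).mpr hf)

theorem tsum_min_sq_nat_add_one_rpow_neg_le {α r : ℝ} (hα : 1 / 2 < α) (hr0 : 0 < r)
    (hr1 : r ≤ 1) :
    ∑' ℓ : ℕ, min (r ^ 2) (((ℓ : ℝ) + 1) ^ (-(2 * α)))
      ≤ (2 + 1 / (2 * α - 1)) * r ^ (2 - 1 / α) := by
  have hα0 : 0 < α := by linarith
  have hp : 1 < 2 * α := by linarith
  set x := r ^ (-(1 / α)) with hx
  have hx1 : 1 ≤ x :=
    one_le_rpow_of_pos_of_le_one_of_nonpos hr0 hr1 (neg_nonpos.mpr (by positivity))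
  set K := ⌈x⌉₊
  have hxK : x ≤ K := Nat.le_ceil x
  have hK2x : (K : ℝ) ≤ 2 * x := by linarith [Nat.ceil_lt_add_one (zero_le_one.trans hx1)]
  have hxr2 : x * r ^ 2 = r ^ (2 - 1 / α) := by
    rw [hx, ← rpow_natCast, ← rpow_add hr0]
    congr 1
    push_cast
    ring
  have hx_pow : x ^ (1 - 2 * α) = r ^ (2 - 1 / α) := by
    rw [hx, ← rpow_mul hr0.le]
    congr 1
    field_simp
    ring
  have htail : ∑' ℓ : ℕ, (((ℓ + K : ℕ) : ℝ) + 1) ^ (-(2 * α))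
      ≤ r ^ (2 - 1 / α) / (2 * α - 1) := calc
    _ = ∑' ℓ : ℕ, ((K : ℝ) + ℓ + 1) ^ (-(2 * α)) := by
      congr! 3
      push_cast
      ring
    _ ≤ (K : ℝ) ^ (1 - 2 * α) / (2 * α - 1) :=
      tsum_add_nat_add_one_rpow_neg_le hp (by linarith)
    _ ≤ x ^ (1 - 2 * α) / (2 * α - 1) := by
      gcongr ?_ / _
      exact rpow_le_rpow_of_nonpos (by linarith) hxK (by linarith)
    _ = r ^ (2 - 1 / α) / (2 * α - 1) := by rw [hx_pow]
  calc _ ≤ K * r ^ 2 + ∑' ℓ : ℕ, (((ℓ + K : ℕ) : ℝ) + 1) ^ (-(2 * α)) :=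
        tsum_min_le_mul_add_tsum_nat_add (summable_nat_add_one_rpow_neg hp)
          (fun _ => by positivity) (by positivity) K
    _ ≤ 2 * r ^ (2 - 1 / α) + r ^ (2 - 1 / α) / (2 * α - 1) := by
      refine add_le_add ?_ htail
      rw [← hxr2]
      nlinarith [sq_nonneg r]
    _ = (2 + 1 / (2 * α - 1)) * r ^ (2 - 1 / α) := by ring

theorem rpow_two_sub_inv_eq_mul_pow_four {α n : ℝ} (hα : 0 < α) (hn : 0 < n) :
    (n ^ (-(α / (2 * α + 1)))) ^ (2 - 1 / α) = n * (n ^ (-(α / (2 * α + 1)))) ^ 4 := by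
  rw [← rpow_natCast, ← rpow_mul hn.le, ← rpow_mul hn.le, mul_comm n, ← rpow_add_one hn.ne']
  congr 1
  field_simp
  ring

theorem stmt_17 (α : ℝ) (hα : 1 / 2 < α) (hα2 : 2 + 1 / (2 * α - 1) ≤ 1600)
    (n : ℕ) (hn : 0 < n) :
    (0 < (n : ℝ) ^ (-(α / (2 * α + 1))) ∧ (n : ℝ) ^ (-(α / (2 * α + 1))) ≤ 1) ∧
    (1 / Real.sqrt n) *
        Real.sqrt (∑' ℓ : ℕ,
          min (((n : ℝ) ^ (-(α / (2 * α + 1)))) ^ 2) (((ℓ : ℝ) + 1) ^ (-(2 * α)))) ≤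
      40 * ((n : ℝ) ^ (-(α / (2 * α + 1)))) ^ 2 := by
  have hn0 : (0 : ℝ) < n := by exact_mod_cast hn
  set r := (n : ℝ) ^ (-(α / (2 * α + 1)))
  have hr0 : 0 < r := rpow_pos_of_pos hn0 _
  have hr1 : r ≤ 1 :=
    rpow_le_one_of_one_le_of_nonpos (by exact_mod_cast hn) (neg_nonpos.mpr (by positivity))
  refine ⟨⟨hr0, hr1⟩, ?_⟩
  have hsum : ∑' ℓ : ℕ, min (r ^ 2) (((ℓ : ℝ) + 1) ^ (-(2 * α))) ≤ 1600 * (n * r ^ 4) := calc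
    _ ≤ (2 + 1 / (2 * α - 1)) * r ^ (2 - 1 / α) :=
      tsum_min_sq_nat_add_one_rpow_neg_le hα hr0 hr1
    _ ≤ 1600 * r ^ (2 - 1 / α) := by gcongr
    _ = 1600 * (n * r ^ 4) := by rw [rpow_two_sub_inv_eq_mul_pow_four (by linarith) hn0]
  rw [one_div_mul_eq_div, div_le_iff₀ (sqrt_pos.mpr hn0), sqrt_le_left (by positivity),
    mul_pow, sq_sqrt hn0.le]
  linarith
end
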